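/- The set of points (x, y) ∈ S⁶ × S⁵ satisfying x₁ = x₂ = x₃ = 0, y₁·x₄ = y₁·x₅ = y₁·x₆ = 0, and y₂ = y₃ = y₄ = y₅ = y₆ = 0 has exactly four elements, namely the points with x₁ = ⋯ = x₆ = 0, x₇ = ±1, y₂ = ⋯ = y₆ = 0, y₁ = ±1. (This is the transverse intersection count establishing that the characteristic number ∫ a³b⁸ of the manifold X₁₁ = (S⁶ × S⁵)/(ℤ/2 × ℤ/2) equals 1 mod 2.) -/

import Mathlib

open scoped BigOperators

/-- `S⁶ × S⁵`: the set of pairs `(x, y)` with `x ∈ ℝ⁷`, `y ∈ ℝ⁶`, `‖x‖ = 1`, `‖y‖ = 1`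
(written via sums of squares).  Coordinates: `x₁,…,x₇` are `p.1 0,…,p.1 6` and
`y₁,…,y₆` are `p.2 0,…,p.2 5`. -/
def sphereProd : Set ((Fin 7 → ℝ) × (Fin 6 → ℝ)) :=
  {p | (∑ i, p.1 i ^ 2) = 1 ∧ (∑ j, p.2 j ^ 2) = 1}

/-- The intersection locus: points of `S⁶ × S⁵` with
`x₁ = x₂ = x₃ = 0`, `y₁·x₄ = y₁·x₅ = y₁·x₆ = 0` and `y₂ = ⋯ = y₆ = 0`. -/
def intersectionLocus : Set ((Fin 7 → ℝ) × (Fin 6 → ℝ)) :=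
  {p | p ∈ sphereProd ∧
    p.1 0 = 0 ∧ p.1 1 = 0 ∧ p.1 2 = 0 ∧
    p.2 0 * p.1 3 = 0 ∧ p.2 0 * p.1 4 = 0 ∧ p.2 0 * p.1 5 = 0 ∧
    p.2 1 = 0 ∧ p.2 2 = 0 ∧ p.2 3 = 0 ∧ p.2 4 = 0 ∧ p.2 5 = 0}

/-- The point with `x₁ = ⋯ = x₆ = 0`, `x₇ = s`, `y₂ = ⋯ = y₆ = 0`, `y₁ = t`. -/
def pt (s t : ℝ) : (Fin 7 → ℝ) × (Fin 6 → ℝ) :=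
  (fun i => if i = 6 then s else 0, fun j => if j = 0 then t else 0)

/-!
On the locus `y₂ = ⋯ = y₆ = 0`, the equation of `S⁵` forces `y₁ = ±1`; in particular `y₁ ≠ 0`, so
`y₁·x₄ = y₁·x₅ = y₁·x₆ = 0` kills `x₄, x₅, x₆`. Only `x₇` survives, and the equation of `S⁶` forces
`x₇ = ±1`. The four sign choices give four distinct points.
-/

lemma pt_injective : Function.Injective (Function.uncurry pt) := by
  rintro ⟨s, t⟩ ⟨s', t'⟩ h
  have hs := congrFun (congrArg Prod.fst h) 6
  have ht := congrFun (congrArg Prod.snd h) 0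
  simp only [Function.uncurry_apply_pair, pt, if_true] at hs ht
  rw [hs, ht]

lemma pt_mem_intersectionLocus_iff {s t : ℝ} :
    pt s t ∈ intersectionLocus ↔ s ^ 2 = 1 ∧ t ^ 2 = 1 := by
  simp [intersectionLocus, sphereProd, pt, Fin.sum_univ_seven, Fin.sum_univ_six]

lemma snd_zero_ne_zero_of_mem_intersectionLocus {p : (Fin 7 → ℝ) × (Fin 6 → ℝ)}
    (hp : p ∈ intersectionLocus) : p.2 0 ≠ 0 := by
  obtain ⟨⟨-, hy⟩, -, -, -, -, -, -, h1, h2, h3, h4, h5⟩ := hp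
  intro h0
  simp [Fin.sum_univ_six, h0, h1, h2, h3, h4, h5] at hy

lemma eq_pt_of_mem_intersectionLocus {p : (Fin 7 → ℝ) × (Fin 6 → ℝ)}
    (hp : p ∈ intersectionLocus) : p = pt (p.1 6) (p.2 0) := by
  have hy0 := snd_zero_ne_zero_of_mem_intersectionLocus hp
  obtain ⟨-, hx0, hx1, hx2, hx3, hx4, hx5, hy1, hy2, hy3, hy4, hy5⟩ := hp
  rw [mul_eq_zero, or_iff_right hy0] at hx3 hx4 hx5
  ext i
  · fin_cases i <;> simp [pt, *]
  · fin_cases i <;> simp [pt, *]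

lemma intersectionLocus_eq_image :
    intersectionLocus = Function.uncurry pt '' ({1, -1} ×ˢ {1, -1}) := by
  ext p
  constructor
  · intro hp
    have hpt := eq_pt_of_mem_intersectionLocus hp
    rw [hpt, pt_mem_intersectionLocus_iff] at hp
    exact ⟨(p.1 6, p.2 0), by simpa using hp, hpt.symm⟩
  · rintro ⟨⟨s, t⟩, hst, rfl⟩
    simp only [Set.mem_prod, Set.mem_insert_iff, Set.mem_singleton_iff] at hst
    simpa [pt_mem_intersectionLocus_iff] using hst

/-- The intersection locus consists exactly of the four points with
`x₇ = ±1`, `y₁ = ±1` and all other coordinates zero; in particular it has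
exactly four elements. -/
theorem intersectionLocus_eq_four_points :
    intersectionLocus = {pt 1 1, pt 1 (-1), pt (-1) 1, pt (-1) (-1)} ∧
    intersectionLocus.ncard = 4 := by
  refine ⟨?_, ?_⟩
  · rw [intersectionLocus_eq_image, Set.image_uncurry_prod]
    simp only [Set.image2_insert_left, Set.image2_singleton_left, Set.image_insert_eq,
      Set.image_singleton, Set.insert_union, Set.singleton_union]
  · rw [intersectionLocus_eq_image, Set.ncard_image_of_injective _ pt_injective, Set.ncard_prod,
      Set.ncard_pair (by norm_num)]
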